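/- Suppose q, p : ℝ → ℝ are differentiable, a₂ ∈ ℝ, p(t) ≠ 0 for all t, and (q, p) satisfy the Hamiltonian system for H_IV(q,p,t,a₁,a₂) = qp(p − q − t) − a₁p − a₂q, namely q' = ∂H/∂p = 2qp − q² − qt − a₁ and p' = −∂H/∂q = −p² + 2qp + tp + a₂. Then Q = q + a₂/p and P = p satisfy the Hamiltonian system for H_IV(Q,P,t,a₁+a₂,−a₂): Q' = 2QP − Q² − Qt − (a₁+a₂) and P' = −P² + 2QP + tP − a₂. -/

import Mathlib

/-! The map `s₂` only moves `q`, by `a₂ / p`, so by the quotient rule `Q' = q' - a₂ p' / p²`;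
substituting the P_IV equations for `q'` and `p'` gives the equations with parameters
`(a₁ + a₂, -a₂)` by a rational-function identity, while `P' = p'` is the old equation rewritten
in terms of `Q`. -/

theorem HasDerivAt.add_const_div {𝕜 : Type*} [NontriviallyNormedField 𝕜] {q p : 𝕜 → 𝕜}
    {q' p' t : 𝕜} (a : 𝕜) (hq : HasDerivAt q q' t) (hp : HasDerivAt p p' t) (hp0 : p t ≠ 0) :
    HasDerivAt (fun s => q s + a / p s) (q' - a * p' / p t ^ 2) t := by
  refine (hq.add ((hasDerivAt_const t a).fun_div hp hp0)).congr_deriv ?_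
  ring

theorem painleveIV_s₂_q_equation (a₁ a₂ q p t : ℝ) (hp : p ≠ 0) :
    (2 * q * p - q ^ 2 - q * t - a₁) - a₂ * (-p ^ 2 + 2 * q * p + t * p + a₂) / p ^ 2
      = 2 * (q + a₂ / p) * p - (q + a₂ / p) ^ 2 - (q + a₂ / p) * t - (a₁ + a₂) := by
  field_simp
  ring

/-- The Bäcklund transformation `s₂ : (q,p) ↦ (q + a₂/p, p)`, `(a₁,a₂) ↦ (a₁+a₂, −a₂)`, maps
solutions of the Hamiltonian system of P_IV(a₁, a₂) to solutions of the Hamiltonian system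
of P_IV(a₁+a₂, −a₂). -/
theorem stmt15 (a₁ a₂ : ℝ) (q p : ℝ → ℝ)
    (hq : Differentiable ℝ q) (hp : Differentiable ℝ p)
    (hp0 : ∀ t, p t ≠ 0)
    (h1 : ∀ t, deriv q t = 2 * q t * p t - q t ^ 2 - q t * t - a₁)
    (h2 : ∀ t, deriv p t = -p t ^ 2 + 2 * q t * p t + t * p t + a₂) :
    (∀ t, deriv (fun s => q s + a₂ / p s) t
        = 2 * (q t + a₂ / p t) * p t - (q t + a₂ / p t) ^ 2
          - (q t + a₂ / p t) * t - (a₁ + a₂)) ∧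
    (∀ t, deriv p t = -p t ^ 2 + 2 * (q t + a₂ / p t) * p t + t * p t - a₂) := by
  refine ⟨fun t => ?_, fun t => ?_⟩
  · rw [((hq t).hasDerivAt.add_const_div a₂ (hp t).hasDerivAt (hp0 t)).deriv, h1 t, h2 t]
    exact painleveIV_s₂_q_equation a₁ a₂ (q t) (p t) t (hp0 t)
  · rw [h2 t]
    field_simp [hp0 t]
    ring
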